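/- arXiv:0810.3670 — 2 statements merged into one kernel-verified Lean document; each statement's English description precedes it below -/
import Mathlib

section
/- Let Y' be the lazy walk with i.i.d. increments P(x=0)=1/2, P(x=±1)=1/4, and G = {Y'_k>0 for 0<k<n, Y'_n=0}. Then for any fixed δ>0 and any 1≤k≤n, P( max_{0≤s≤n^{2/3}} |Y'_{k+s} − Y'_k| > n^{1/3+δ} | G ) → 0 as n→∞. -/
/-!
Hoeffding's inequality bounds each unconditional probability
`P(|Y'_{k+s} - Y'_k| > n^{1/3+δ})` with `s ≤ n^{2/3}` by `2 exp(-n^{2δ}/2)`, and a union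
bound over `s` costs a factor `2n`. Conditioning on `G` multiplies this by `1 / P(G)`, which
is only polynomial: `P(G) ≥ 1 / (8n²)`.

For the lower bound, give a lazy path of length `L` the weight `∏ 4 P(x = a_i)`, i.e. `2`
per zero step. By the cycle lemma, every path with total `1` has a rotation whose prefix
sums are all positive, and appending a down-step turns such a rotation into an excursion
of length `L + 1`. The total weight of the paths with total `1` is the coefficient of
`X^{L+1}` in `(1 + 2X + X²)^L = (1 + X)^{2L}`, namely `C(2L, L+1) ≥ 4^L L / ((2L+1)(L+1))`.
-/

open Finset Fin.NatCast Polynomial MeasureTheory ProbabilityTheory Real Filter Topology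
open scoped ENNReal NNReal

namespace LazyWalk

section Paths

variable {L : ℕ}

def rotate (k : Fin L) (a : Fin L → ℤ) : Fin L → ℤ := fun i => a (i + k)

def weight (w : ℤ → ℕ) (a : Fin L → ℤ) : ℕ := ∏ i, w (a i)

lemma weight_snoc (w : ℤ → ℕ) (b : Fin L → ℤ) (v : ℤ) :
    weight w (Fin.snoc b v : Fin (L + 1) → ℤ) = weight w b * w v := by
  simp [weight, Fin.prod_univ_castSucc]

/-- `lazyWeight v / 4` is the probability that a lazy step equals `v`. -/
def lazyWeight (v : ℤ) : ℕ := if v = 0 then 2 else 1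

lemma sum_lazyWeight_mul_X_pow :
    ∑ v ∈ ({-1, 0, 1} : Finset ℤ), C (lazyWeight v) * X ^ (v + 1).toNat = (X + 1 : ℕ[X]) ^ 2 := by
  simp [lazyWeight]
  ring

variable [NeZero L]

/-- Indices are read modulo `L`, so this is the prefix sum of the `L`-periodic extension of
`a`, and rotating `a` shifts its prefix sums. -/
def prefixSum (a : Fin L → ℤ) (j : ℕ) : ℤ := ∑ i ∈ range j, a (i : Fin L)

lemma prefixSum_eq_sum (a : Fin L → ℤ) : prefixSum a L = ∑ i, a i := by
  simpa [prefixSum] using (Fin.sum_univ_eq_sum_range (fun i => a (i : Fin L)) L).symm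

lemma prefixSum_add (a : Fin L → ℤ) (j m : ℕ) :
    prefixSum a (j + m) = prefixSum a j + ∑ i ∈ range m, a ((j + i : ℕ) : Fin L) :=
  sum_range_add _ _ _

lemma prefixSum_length_add (a : Fin L → ℤ) (j : ℕ) :
    prefixSum a (L + j) = prefixSum a L + prefixSum a j := by
  rw [prefixSum_add]
  simp [prefixSum]

lemma prefixSum_rotate (k : Fin L) (a : Fin L → ℤ) (j : ℕ) :
    prefixSum (rotate k a) j = prefixSum a (k + j) - prefixSum a k := by
  rw [prefixSum_add]
  simp [prefixSum, rotate, add_comm]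

lemma prefixSum_snoc_of_le (b : Fin L → ℤ) (v : ℤ) {j : ℕ} (hj : j ≤ L) :
    prefixSum (Fin.snoc b v : Fin (L + 1) → ℤ) j = prefixSum b j := by
  refine sum_congr rfl fun i hi => ?_
  have hiL : i < L := by have := mem_range.1 hi; omega
  have hcast : ((i : ℕ) : Fin (L + 1)) = Fin.castSucc (i : Fin L) := by
    ext
    simp [Fin.val_natCast, Nat.mod_eq_of_lt hiL, Nat.mod_eq_of_lt (Nat.lt_succ_of_lt hiL)]
  rw [hcast, Fin.snoc_castSucc]

lemma prefixSum_snoc (b : Fin L → ℤ) (v : ℤ) :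
    prefixSum (Fin.snoc b v : Fin (L + 1) → ℤ) (L + 1) = prefixSum b L + v := by
  rw [← prefixSum_snoc_of_le b v le_rfl, prefixSum, sum_range_succ, Fin.natCast_eq_last,
    Fin.snoc_last]
  rfl

lemma rotate_neg_rotate (k : Fin L) (a : Fin L → ℤ) : rotate (-k) (rotate k a) = a := by
  funext i
  simp [rotate]

lemma weight_rotate (w : ℤ → ℕ) (k : Fin L) (a : Fin L → ℤ) :
    weight w (rotate k a) = weight w a :=
  Fintype.prod_equiv (Equiv.addRight k) _ _ fun _ => rfl

/-- The cycle lemma. Minimising `(L + 1) * prefixSum a i - i` picks the last minimiser `k` of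
the prefix sums, and rotating by `k` makes every prefix sum positive. -/
theorem exists_rotate_prefixSum_pos (a : Fin L → ℤ) (ha : prefixSum a L = 1) :
    ∃ k : Fin L, ∀ j ∈ Icc 1 L, 0 < prefixSum (rotate k a) j := by
  obtain ⟨k, hk, hmin⟩ := exists_min_image (range L)
    (fun i => (L + 1 : ℤ) * prefixSum a i - i) (nonempty_range_iff.2 (NeZero.ne L))
  have hkL := mem_range.1 hk
  refine ⟨(k : Fin L), fun j hj => ?_⟩
  obtain ⟨hj1, hjL⟩ := mem_Icc.1 hj
  rw [prefixSum_rotate, Fin.val_natCast, Nat.mod_eq_of_lt hkL]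
  rcases lt_or_ge (k + j) L with hlt | hge
  · have := hmin (k + j) (mem_range.2 hlt)
    push_cast at this
    nlinarith
  · obtain ⟨r, hr⟩ : ∃ r, k + j = L + r := ⟨k + j - L, by omega⟩
    have := hmin r (mem_range.2 (by omega))
    rw [hr, prefixSum_length_add, ha]
    have hrk : (r : ℤ) ≤ k := by omega
    nlinarith

variable (L) in
def sumOnePaths (T : Finset ℤ) : Finset (Fin L → ℤ) :=
  {a ∈ Fintype.piFinset fun _ => T | prefixSum a L = 1}

variable (L) in
def positiveSumOnePaths (T : Finset ℤ) : Finset (Fin L → ℤ) :=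
  (sumOnePaths L T).filter fun a => ∀ j ∈ Icc (1 : ℕ) L, 0 < prefixSum a j

lemma rotate_mem_sumOnePaths {T : Finset ℤ} (k : Fin L) {a : Fin L → ℤ}
    (ha : a ∈ sumOnePaths L T) : rotate k a ∈ sumOnePaths L T := by
  simp only [sumOnePaths, mem_filter, Fintype.mem_piFinset] at ha ⊢
  refine ⟨fun i => ha.1 _, ?_⟩
  rw [prefixSum_rotate, add_comm, prefixSum_length_add, ha.2, add_sub_cancel_right]

theorem sum_weight_sumOnePaths_le (T : Finset ℤ) (w : ℤ → ℕ) :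
    ∑ a ∈ sumOnePaths L T, weight w a ≤ L * ∑ a ∈ positiveSumOnePaths L T, weight w a := by
  have hcover : sumOnePaths L T ⊆
      (univ ×ˢ positiveSumOnePaths L T).image fun p => rotate (-p.1) p.2 := by
    intro a ha
    obtain ⟨k, hk⟩ := exists_rotate_prefixSum_pos a (mem_filter.1 ha).2
    refine mem_image.2 ⟨(k, rotate k a), ?_, rotate_neg_rotate k a⟩
    simp only [positiveSumOnePaths, mem_product, mem_univ, mem_filter, true_and]
    exact ⟨rotate_mem_sumOnePaths k ha, hk⟩
  calc ∑ a ∈ sumOnePaths L T, weight w a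
      ≤ ∑ a ∈ (univ ×ˢ positiveSumOnePaths L T).image (fun p => rotate (-p.1) p.2), weight w a :=
        sum_le_sum_of_subset hcover
    _ ≤ ∑ p ∈ univ ×ˢ positiveSumOnePaths L T, weight w (rotate (-p.1) p.2) :=
        sum_image_le_of_nonneg fun _ _ => Nat.zero_le _
    _ = L * ∑ a ∈ positiveSumOnePaths L T, weight w a := by
        simp [weight_rotate, sum_product]

theorem sum_lazyWeight_sumOnePaths :
    ∑ a ∈ sumOnePaths L {-1, 0, 1}, weight lazyWeight a = (2 * L).choose (L + 1) := by
  have hgen : (X + 1 : ℕ[X]) ^ (2 * L) = ∑ a ∈ Fintype.piFinset fun _ : Fin L => {-1, 0, 1},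
      C (weight lazyWeight a) * X ^ ∑ i, (a i + 1).toNat := by
    rw [pow_mul, ← sum_lazyWeight_mul_X_pow, ← Fin.prod_const, prod_univ_sum]
    simp [weight, prod_mul_distrib, prod_pow_eq_pow_sum]
  have hdegree : ∀ a ∈ Fintype.piFinset fun _ : Fin L => ({-1, 0, 1} : Finset ℤ),
      (L + 1 = ∑ i, (a i + 1).toNat ↔ prefixSum a L = 1) := by
    intro a ha
    have hcast : ((∑ i, (a i + 1).toNat : ℕ) : ℤ) = prefixSum a L + L := by
      rw [prefixSum_eq_sum]
      push_cast
      rw [sum_congr rfl fun i _ => Int.toNat_of_nonneg (by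
        have := Fintype.mem_piFinset.1 ha i; simp at this; omega)]
      simp [sum_add_distrib]
    omega
  have hcoeff := congrArg (coeff · (L + 1)) hgen
  simp only [coeff_X_add_one_pow, finsetSum_coeff, coeff_C_mul_X_pow] at hcoeff
  rw [sumOnePaths, sum_filter]
  exact_mod_cast (hcoeff.trans
    (sum_congr rfl fun a ha => by rw [if_congr (hdegree a ha) rfl rfl])).symm

lemma four_pow_succ_le_mul_sum_lazyWeight_positiveSumOnePaths :
    4 ^ (L + 1) ≤
      8 * (L + 1) ^ 2 * ∑ a ∈ positiveSumOnePaths L {-1, 0, 1}, weight lazyWeight a := by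
  set W := ∑ a ∈ positiveSumOnePaths L {-1, 0, 1}, weight lazyWeight a
  have hL : 0 < L := Nat.pos_of_neZero L
  have hcycle : (2 * L).choose (L + 1) ≤ L * W := by
    rw [← sum_lazyWeight_sumOnePaths]
    exact sum_weight_sumOnePaths_le _ _
  have hchoose := Nat.choose_succ_right_eq (2 * L) L
  rw [show 2 * L - L = L by omega] at hchoose
  refine Nat.le_of_mul_le_mul_left ?_ hL
  calc L * 4 ^ (L + 1) ≤ 4 * L * ((2 * L + 1) * (2 * L).choose L) := by
        rw [pow_succ]
        nlinarith [Nat.four_pow_le_two_mul_add_one_mul_central_binom L]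
    _ = 4 * (2 * L + 1) * (L + 1) * (2 * L).choose (L + 1) := by
        rw [mul_assoc _ (L + 1), mul_comm (L + 1), hchoose]; ring
    _ ≤ 4 * (2 * L + 1) * (L + 1) * (L * W) := Nat.mul_le_mul_left _ hcycle
    _ ≤ L * (8 * (L + 1) ^ 2 * W) := by nlinarith

end Paths

lemma sq_rpow_div_two_mul_rpow {n : ℝ} (hn : 0 < n) (δ : ℝ) :
    (n ^ ((1 : ℝ) / 3 + δ)) ^ 2 / (2 * n ^ ((2 : ℝ) / 3)) = 2⁻¹ * n ^ (2 * δ) := by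
  rw [← rpow_natCast, ← rpow_mul hn.le, show ((1 : ℝ) / 3 + δ) * (2 : ℕ) = 2 / 3 + 2 * δ by
    push_cast; ring, rpow_add hn]
  field_simp [(rpow_pos_of_pos hn ((2 : ℝ) / 3)).ne']

lemma floor_rpow_add_one_le {n : ℝ} (hn : 1 ≤ n) : (⌊n ^ ((2 : ℝ) / 3)⌋₊ : ℝ) + 1 ≤ 2 * n := by
  have := rpow_le_rpow_of_exponent_le hn (by norm_num : (2 : ℝ) / 3 ≤ 1)
  rw [rpow_one] at this
  linarith [Nat.floor_le (rpow_nonneg (zero_le_one.trans hn) ((2 : ℝ) / 3))]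

lemma tendsto_pow_mul_exp_neg_mul_rpow (p : ℕ) {b ε : ℝ} (hb : 0 < b) (hε : 0 < ε) :
    Tendsto (fun y : ℝ => y ^ p * exp (-b * y ^ ε)) atTop (𝓝 0) := by
  refine ((tendsto_rpow_mul_exp_neg_mul_atTop_nhds_zero (p / ε) b hb).comp
    (tendsto_rpow_atTop hε)).congr' ?_
  filter_upwards [eventually_gt_atTop 0] with y hy
  rw [Function.comp_apply, ← rpow_mul hy.le, mul_div_cancel₀ _ hε.ne', rpow_natCast]

section Walk

variable {Ω : Type*} (x : ℕ → Ω → ℤ)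

def cylinder {n : ℕ} (a : Fin n → ℤ) : Set Ω := ⋂ i : Fin n, x i ⁻¹' {a i}

def positiveExcursion (n : ℕ) : Set Ω :=
  {ω | (∀ j, 0 < j → j < n → 0 < ∑ i ∈ range j, x i ω) ∧ ∑ i ∈ range n, x i ω = 0}

def largeIncrement (t : ℝ) (k s : ℕ) : Set Ω :=
  {ω | t < ((|∑ i ∈ range (k + s), x i ω - ∑ i ∈ range k, x i ω| : ℤ) : ℝ)}

def largeFluctuation (t v : ℝ) (k : ℕ) : Set Ω :=
  {ω | ∃ s : ℕ, (s : ℝ) ≤ v ∧ ω ∈ largeIncrement x t k s}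

variable {x}

lemma mem_cylinder {n : ℕ} {a : Fin n → ℤ} {ω : Ω} :
    ω ∈ cylinder x a ↔ ∀ i : Fin n, x i ω = a i := by
  simp [cylinder]

lemma disjoint_cylinder {n : ℕ} {a b : Fin n → ℤ} (hab : a ≠ b) :
    Disjoint (cylinder x a) (cylinder x b) :=
  Set.disjoint_left.2 fun _ ha hb =>
    hab (funext fun i => (mem_cylinder.1 ha i).symm.trans (mem_cylinder.1 hb i))

lemma sum_range_eq_prefixSum {n : ℕ} [NeZero n] {a : Fin n → ℤ} {ω : Ω}
    (hω : ω ∈ cylinder x a) {j : ℕ} (hj : j ≤ n) : ∑ i ∈ range j, x i ω = prefixSum a j := by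
  refine sum_congr rfl fun i hi => ?_
  have hin : i < n := (mem_range.1 hi).trans_le hj
  simpa [Fin.val_natCast, Nat.mod_eq_of_lt hin] using mem_cylinder.1 hω (i : Fin n)

lemma cylinder_snoc_subset_positiveExcursion {L : ℕ} [NeZero L] {T : Finset ℤ} {b : Fin L → ℤ}
    (hb : b ∈ positiveSumOnePaths L T) :
    cylinder x (Fin.snoc b (-1) : Fin (L + 1) → ℤ) ⊆ positiveExcursion x (L + 1) := by
  intro ω hω
  simp only [positiveSumOnePaths, sumOnePaths, mem_filter] at hb
  obtain ⟨⟨-, htotal⟩, hpos⟩ := hb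
  refine ⟨fun j hj0 hjn => ?_, ?_⟩
  · rw [sum_range_eq_prefixSum hω hjn.le, prefixSum_snoc_of_le _ _ (Nat.lt_succ_iff.1 hjn)]
    exact hpos j (mem_Icc.2 ⟨hj0, Nat.lt_succ_iff.1 hjn⟩)
  · rw [sum_range_eq_prefixSum hω le_rfl, prefixSum_snoc, htotal]
    norm_num

variable [MeasurableSpace Ω]

structure HasLazyLaw (μ : Measure Ω) (X : Ω → ℤ) : Prop where
  zero : μ {ω | X ω = 0} = 1 / 2
  one : μ {ω | X ω = 1} = 1 / 4
  neg_one : μ {ω | X ω = -1} = 1 / 4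

variable {μ : Measure Ω}

namespace HasLazyLaw

variable {X : Ω → ℤ}

lemma measure_preimage (h : HasLazyLaw μ X) {v : ℤ} (hv : v ∈ ({-1, 0, 1} : Finset ℤ)) :
    μ (X ⁻¹' {v}) = lazyWeight v / 4 := by
  simp only [mem_insert, mem_singleton] at hv
  rcases hv with rfl | rfl | rfl
  · rw [show X ⁻¹' {-1} = {ω | X ω = -1} from rfl, h.neg_one]
    simp [lazyWeight]
  · rw [show X ⁻¹' {0} = {ω | X ω = 0} from rfl, h.zero]
    rw [ENNReal.div_eq_div_iff] <;> norm_num [lazyWeight]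
  · rw [show X ⁻¹' {1} = {ω | X ω = 1} from rfl, h.one]
    simp [lazyWeight]

lemma ae_mem [IsProbabilityMeasure μ] (hX : Measurable X) (h : HasLazyLaw μ X) :
    ∀ᵐ ω ∂μ, X ω ∈ ({-1, 0, 1} : Finset ℤ) := by
  have htotal : μ (X ⁻¹' ↑({-1, 0, 1} : Finset ℤ)) = 1 := by
    rw [← sum_measure_preimage_singleton _ fun v _ => hX (measurableSet_singleton v),
      sum_congr rfl fun v hv => h.measure_preimage hv]
    norm_num [lazyWeight]
    rw [inv_eq_one_div, ENNReal.div_add_div_same, ENNReal.div_add_div_same]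
    norm_num
    exact ENNReal.div_self (by norm_num) (by norm_num)
  exact (prob_compl_eq_zero_iff (hX (Finset.measurableSet _))).2 htotal

lemma integral_eq_zero [IsProbabilityMeasure μ] (hX : Measurable X) (h : HasLazyLaw μ X) :
    μ[fun ω => (X ω : ℝ)] = 0 := by
  have hdecomp : (fun ω => (X ω : ℝ)) =ᵐ[μ]
      fun ω => (X ⁻¹' {1}).indicator 1 ω - (X ⁻¹' {-1}).indicator 1 ω := by
    filter_upwards [h.ae_mem hX] with ω hω
    simp only [mem_insert, mem_singleton] at hω
    rcases hω with hω | hω | hω <;> simp [Set.indicator, hω]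
  have hone := hX (measurableSet_singleton 1)
  have hneg := hX (measurableSet_singleton (-1))
  rw [integral_congr_ae hdecomp, integral_sub ((integrable_const 1).indicator hone)
    ((integrable_const 1).indicator hneg), integral_indicator_one hone, integral_indicator_one hneg,
    measureReal_def, measureReal_def]
  exact sub_eq_zero.2 (congrArg ENNReal.toReal (h.one.trans h.neg_one.symm))

lemma hasSubgaussianMGF [IsProbabilityMeasure μ] (hX : Measurable X) (h : HasLazyLaw μ X) :
    HasSubgaussianMGF (fun ω => (X ω : ℝ)) 1 μ := by
  have hIcc : ∀ᵐ ω ∂μ, (X ω : ℝ) ∈ Set.Icc (-1) 1 := by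
    filter_upwards [h.ae_mem hX] with ω hω
    simp only [mem_insert, mem_singleton] at hω
    rcases hω with hω | hω | hω <;> simp [hω]
  have := hasSubgaussianMGF_of_mem_Icc_of_integral_eq_zero
    (Measurable.aemeasurable (by fun_prop)) hIcc (h.integral_eq_zero hX)
  norm_num at this
  exact this

end HasLazyLaw

lemma cond_apply_le_inv_mul (s t : Set Ω) : μ[t | s] ≤ (μ s)⁻¹ * μ t := by
  rw [ProbabilityTheory.cond, Measure.smul_apply, smul_eq_mul]
  gcongr
  exact Measure.restrict_le_self

lemma measureReal_lt_abs_sum_le [IsProbabilityMeasure μ] {ι : Type*} {Y : ι → Ω → ℝ}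
    (hindep : iIndepFun Y μ) {c : ℝ≥0} {S : Finset ι} (hY : ∀ i ∈ S, HasSubgaussianMGF (Y i) c μ)
    {t : ℝ} (ht : 0 ≤ t) :
    μ.real {ω | t < |∑ i ∈ S, Y i ω|} ≤ 2 * exp (-t ^ 2 / (2 * (S.card * c))) := by
  have hneg : iIndepFun (fun i => -Y i) μ := hindep.comp (fun _ => Neg.neg) fun _ => measurable_neg
  have hupper := HasSubgaussianMGF.measure_sum_ge_le_of_iIndepFun hindep hY ht
  have hlower :=
    HasSubgaussianMGF.measure_sum_ge_le_of_iIndepFun hneg (fun i hi => (hY i hi).neg) ht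
  simp only [sum_const, nsmul_eq_mul, NNReal.coe_mul, NNReal.coe_natCast, Pi.neg_apply,
    sum_neg_distrib] at hupper hlower
  calc μ.real {ω | t < |∑ i ∈ S, Y i ω|}
      ≤ μ.real ({ω | t ≤ ∑ i ∈ S, Y i ω} ∪ {ω | t ≤ -∑ i ∈ S, Y i ω}) := by
        refine measureReal_mono fun ω (hω : t < |∑ i ∈ S, Y i ω|) => ?_
        rcases le_abs'.1 hω.le with h | h
        · exact Or.inr (show t ≤ -∑ i ∈ S, Y i ω by linarith)
        · exact Or.inl h
    _ ≤ _ := (measureReal_union_le _ _).trans (by linarith)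

lemma measurableSet_cylinder (hmeas : ∀ i, Measurable (x i)) {n : ℕ} (a : Fin n → ℤ) :
    MeasurableSet (cylinder x a) :=
  MeasurableSet.iInter fun i => hmeas i (measurableSet_singleton _)

lemma measure_cylinder (hindep : iIndepFun x μ) (hlaw : ∀ i, HasLazyLaw μ (x i)) {n : ℕ}
    {a : Fin n → ℤ} (ha : a ∈ Fintype.piFinset fun _ => ({-1, 0, 1} : Finset ℤ)) :
    μ (cylinder x a) = weight lazyWeight a / 4 ^ n := by
  have hprod := (hindep.precomp Fin.val_injective).measure_inter_preimage_eq_mul univ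
    (sets := fun i => {a i}) fun _ _ => measurableSet_singleton _
  simp only [mem_univ, Set.iInter_true] at hprod
  rw [cylinder, hprod, prod_congr rfl fun (i : Fin n) _ => (hlaw i).measure_preimage
    (Fintype.mem_piFinset.1 ha i), weight, Nat.cast_prod]
  simp [div_eq_mul_inv, prod_mul_distrib, ENNReal.inv_pow]

lemma measure_cylinder_snoc (hindep : iIndepFun x μ) (hlaw : ∀ i, HasLazyLaw μ (x i)) {L : ℕ}
    {b : Fin L → ℤ} (hb : b ∈ Fintype.piFinset fun _ => ({-1, 0, 1} : Finset ℤ)) :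
    μ (cylinder x (Fin.snoc b (-1) : Fin (L + 1) → ℤ)) = weight lazyWeight b / 4 ^ (L + 1) := by
  rw [measure_cylinder hindep hlaw, weight_snoc]
  · simp [lazyWeight]
  · refine Fintype.mem_piFinset.2 fun i => Fin.lastCases (by simp) (fun i => ?_) i
    simpa using Fintype.mem_piFinset.1 hb i

theorem inv_le_measure_positiveExcursion (hmeas : ∀ i, Measurable (x i))
    (hindep : iIndepFun x μ) (hlaw : ∀ i, HasLazyLaw μ (x i)) {n : ℕ} (hn : 2 ≤ n) :
    (8 * (n : ℝ≥0∞) ^ 2)⁻¹ ≤ μ (positiveExcursion x n) := by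
  obtain ⟨L, rfl⟩ : ∃ L, n = L + 1 := ⟨n - 1, by omega⟩
  have : NeZero L := ⟨by omega⟩
  set P := positiveSumOnePaths L {-1, 0, 1}
  have hdisj : (P : Set (Fin L → ℤ)).PairwiseDisjoint
      fun b => cylinder x (Fin.snoc b (-1) : Fin (L + 1) → ℤ) := fun b _ b' _ h =>
    disjoint_cylinder fun h' => h (Fin.snoc_left_injective (α := fun _ => ℤ) (-1) h')
  have hunion : μ (⋃ b ∈ P, cylinder x (Fin.snoc b (-1) : Fin (L + 1) → ℤ))
      = ((∑ b ∈ P, weight lazyWeight b : ℕ) : ℝ≥0∞) * (4 ^ (L + 1))⁻¹ := by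
    rw [measure_biUnion_finset hdisj fun b _ => measurableSet_cylinder hmeas _, Nat.cast_sum,
      sum_mul]
    exact sum_congr rfl fun b hb => (measure_cylinder_snoc hindep hlaw
      (mem_filter.1 (mem_filter.1 hb).1).1).trans (div_eq_mul_inv _ _)
  calc (8 * ((L + 1 : ℕ) : ℝ≥0∞) ^ 2)⁻¹
      ≤ ((∑ b ∈ P, weight lazyWeight b : ℕ) : ℝ≥0∞) * (4 ^ (L + 1))⁻¹ := by
        rw [← div_eq_mul_inv, ENNReal.le_div_iff_mul_le (Or.inl (by positivity)) (Or.inl (by simp)),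
          ENNReal.inv_mul_le_iff (by positivity) (by finiteness)]
        exact_mod_cast four_pow_succ_le_mul_sum_lazyWeight_positiveSumOnePaths
    _ = μ (⋃ b ∈ P, cylinder x (Fin.snoc b (-1) : Fin (L + 1) → ℤ)) := hunion.symm
    _ ≤ μ (positiveExcursion x (L + 1)) :=
        measure_mono (Set.iUnion₂_subset fun _ hb => cylinder_snoc_subset_positiveExcursion hb)

lemma measureReal_largeIncrement_le [IsProbabilityMeasure μ] (hmeas : ∀ i, Measurable (x i))
    (hindep : iIndepFun x μ) (hlaw : ∀ i, HasLazyLaw μ (x i)) (k s : ℕ) {t v : ℝ} (ht : 0 ≤ t)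
    (hsv : (s : ℝ) ≤ v) :
    μ.real (largeIncrement x t k s) ≤ 2 * exp (-t ^ 2 / (2 * v)) := by
  have hset : largeIncrement x t k s = {ω | t < |∑ i ∈ Ico k (k + s), (x i ω : ℝ)|} := by
    ext ω
    simp [largeIncrement, sum_Ico_eq_sub _ (Nat.le_add_right k s)]
  rw [hset]
  rcases Nat.eq_zero_or_pos s with rfl | hs
  · simp [not_lt.2 ht]
    positivity
  have hreal : iIndepFun (fun i ω => (x i ω : ℝ)) μ :=
    hindep.comp (fun _ => Int.cast) fun _ => measurable_of_countable _
  refine (measureReal_lt_abs_sum_le hreal (fun i _ => (hlaw i).hasSubgaussianMGF (hmeas i))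
    ht).trans ?_
  have hs' : (0 : ℝ) < s := by exact_mod_cast hs
  simp only [Nat.card_Ico, add_tsub_cancel_left, NNReal.coe_one, mul_one]
  gcongr 2 * exp ?_
  rw [neg_div, neg_div, neg_le_neg_iff]
  exact div_le_div_of_nonneg_left (sq_nonneg t) (by positivity) (by linarith)

lemma measure_largeFluctuation_le [IsProbabilityMeasure μ] (hmeas : ∀ i, Measurable (x i))
    (hindep : iIndepFun x μ) (hlaw : ∀ i, HasLazyLaw μ (x i)) (k : ℕ) {t v : ℝ} (ht : 0 ≤ t)
    (hv : 0 ≤ v) :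
    μ (largeFluctuation x t v k) ≤ ENNReal.ofReal ((⌊v⌋₊ + 1) * (2 * exp (-t ^ 2 / (2 * v)))) := by
  have hcover : largeFluctuation x t v k ⊆ ⋃ s ∈ range (⌊v⌋₊ + 1), largeIncrement x t k s :=
    fun ω ⟨s, hs, hω⟩ => Set.mem_biUnion (mem_range.2 (Nat.lt_succ_of_le (Nat.le_floor hs))) hω
  have hincrement : ∀ s ∈ range (⌊v⌋₊ + 1),
      μ (largeIncrement x t k s) ≤ ENNReal.ofReal (2 * exp (-t ^ 2 / (2 * v))) := by
    intro s hs
    have hsv : (s : ℝ) ≤ v :=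
      (Nat.cast_le.2 (Nat.lt_succ_iff.1 (mem_range.1 hs))).trans (Nat.floor_le hv)
    rw [← ofReal_measureReal]
    exact ENNReal.ofReal_le_ofReal (measureReal_largeIncrement_le hmeas hindep hlaw k s ht hsv)
  calc μ (largeFluctuation x t v k) ≤ ∑ s ∈ range (⌊v⌋₊ + 1), μ (largeIncrement x t k s) :=
        (measure_mono hcover).trans (measure_biUnion_finset_le _ _)
    _ ≤ ∑ s ∈ range (⌊v⌋₊ + 1), ENNReal.ofReal (2 * exp (-t ^ 2 / (2 * v))) :=
        sum_le_sum hincrement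
    _ = _ := by
        rw [sum_const, card_range, nsmul_eq_mul, ENNReal.ofReal_mul (p := (⌊v⌋₊ : ℝ) + 1)
          (by positivity), ← Nat.cast_succ, ENNReal.ofReal_natCast]

theorem cond_largeFluctuation_le [IsProbabilityMeasure μ] (hmeas : ∀ i, Measurable (x i))
    (hindep : iIndepFun x μ) (hlaw : ∀ i, HasLazyLaw μ (x i)) (δ : ℝ) (k : ℕ) {n : ℕ}
    (hn : 2 ≤ n) :
    μ[largeFluctuation x ((n : ℝ) ^ ((1 : ℝ) / 3 + δ)) ((n : ℝ) ^ ((2 : ℝ) / 3)) k |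
        positiveExcursion x n]
      ≤ ENNReal.ofReal (32 * n ^ 3 * exp (-2⁻¹ * n ^ (2 * δ))) := by
  have hn1 : (1 : ℝ) ≤ n := by exact_mod_cast (by omega : 1 ≤ n)
  have hexcursion : (μ (positiveExcursion x n))⁻¹ ≤ ENNReal.ofReal (8 * n ^ 2) := by
    rw [ENNReal.ofReal_mul (by norm_num), ENNReal.ofReal_pow (by positivity),
      ENNReal.ofReal_natCast, ENNReal.ofReal_ofNat]
    exact ENNReal.inv_le_iff_inv_le.2 (inv_le_measure_positiveExcursion hmeas hindep hlaw hn)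
  calc _ ≤ _ := cond_apply_le_inv_mul _ _
    _ ≤ _ := mul_le_mul' hexcursion (measure_largeFluctuation_le hmeas hindep hlaw k
        (by positivity) (by positivity))
    _ = _ := (ENNReal.ofReal_mul (by positivity)).symm
    _ ≤ _ := by
        rw [neg_div, sq_rpow_div_two_mul_rpow (by positivity), ← neg_mul]
        refine ENNReal.ofReal_le_ofReal ?_
        have := mul_le_mul_of_nonneg_left (floor_rpow_add_one_le hn1)
          (by positivity : 0 ≤ 16 * (n : ℝ) ^ 2 * exp (-2⁻¹ * n ^ (2 * δ)))
        nlinarith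

end Walk

end LazyWalk

open MeasureTheory ProbabilityTheory Finset Filter

theorem lazy_walk_cond_fluctuation_tendsto_zero_general
    {Ω : Type*} [MeasurableSpace Ω] (μ : Measure Ω) [IsProbabilityMeasure μ]
    (x : ℕ → Ω → ℤ) (hmeas : ∀ i, Measurable (x i))
    (hindep : iIndepFun x μ)
    (h0 : ∀ i, μ {ω | x i ω = 0} = 1 / 2)
    (h1 : ∀ i, μ {ω | x i ω = 1} = 1 / 4)
    (hm1 : ∀ i, μ {ω | x i ω = -1} = 1 / 4)
    (δ : ℝ) (hδ : 0 < δ) (k : ℕ → ℕ) :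
    Tendsto (fun n : ℕ =>
        (μ[|{ω | (∀ j, 0 < j → j < n → 0 < ∑ i ∈ range j, x i ω) ∧
            ∑ i ∈ range n, x i ω = 0}])
          {ω | ∃ s : ℕ, (s : ℝ) ≤ (n : ℝ) ^ ((2 : ℝ) / 3) ∧
            (n : ℝ) ^ ((1 : ℝ) / 3 + δ) <
              ((|∑ i ∈ range (k n + s), x i ω - ∑ i ∈ range (k n), x i ω| : ℤ) : ℝ)})
      atTop (nhds 0) := by
  have hbound : Tendsto (fun n : ℕ => ENNReal.ofReal (32 * n ^ 3 * exp (-2⁻¹ * n ^ (2 * δ))))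
      atTop (nhds 0) := by
    rw [← ENNReal.ofReal_zero]
    refine ENNReal.tendsto_ofReal ?_
    simpa [mul_assoc] using ((LazyWalk.tendsto_pow_mul_exp_neg_mul_rpow 3 (by norm_num)
      (by linarith : 0 < 2 * δ)).comp tendsto_natCast_atTop_atTop).const_mul 32
  refine tendsto_of_tendsto_of_tendsto_of_le_of_le' tendsto_const_nhds hbound
    (Eventually.of_forall fun _ => zero_le) ?_
  filter_upwards [eventually_ge_atTop 2] with n hn
  exact LazyWalk.cond_largeFluctuation_le hmeas hindep (fun i => ⟨h0 i, h1 i, hm1 i⟩) δ (k n) hn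

/-- Let `Y'` be the lazy walk with i.i.d. increments taking value `0` with probability
`1/2` and `±1` with probability `1/4` each, and let
`G_n = {Y'_k > 0 for 0 < k < n, Y'_n = 0}`.  Then for any fixed `δ > 0` and any choice of
times `1 ≤ k_n ≤ n`,
`P( max_{0 ≤ s ≤ n^{2/3}} |Y'_{k_n + s} - Y'_{k_n}| > n^{1/3 + δ} | G_n ) → 0`
as `n → ∞`. -/
theorem lazy_walk_cond_fluctuation_tendsto_zero
    {Ω : Type*} [MeasurableSpace Ω] (μ : Measure Ω) [IsProbabilityMeasure μ]
    (x : ℕ → Ω → ℤ) (hmeas : ∀ i, Measurable (x i))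
    (hindep : iIndepFun x μ)
    (h0 : ∀ i, μ {ω | x i ω = 0} = 1 / 2)
    (h1 : ∀ i, μ {ω | x i ω = 1} = 1 / 4)
    (hm1 : ∀ i, μ {ω | x i ω = -1} = 1 / 4)
    (δ : ℝ) (hδ : 0 < δ) (k : ℕ → ℕ) (hk : ∀ n, 1 ≤ k n ∧ k n ≤ n) :
    Tendsto (fun n : ℕ =>
        (μ[|{ω | (∀ j, 0 < j → j < n → 0 < ∑ i ∈ range j, x i ω) ∧
            ∑ i ∈ range n, x i ω = 0}])
          {ω | ∃ s : ℕ, (s : ℝ) ≤ (n : ℝ) ^ ((2 : ℝ) / 3) ∧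
            (n : ℝ) ^ ((1 : ℝ) / 3 + δ) <
              ((|∑ i ∈ range (k n + s), x i ω - ∑ i ∈ range (k n), x i ω| : ℤ) : ℝ)})
      atTop (nhds 0) :=
  lazy_walk_cond_fluctuation_tendsto_zero_general μ x hmeas hindep h0 h1 hm1 δ hδ k
end

section
/- Let C=(A,B,≺) be a two-chain cover with greedy pair of linear orders (λ,δ). If there exists 0<k<n with V(k)=W(k) for the associated walks (where V steps up at time i iff λ_i∈A and W steps up at time i iff δ_i∈A), then the first k elements of λ and the first k elements of δ coincide as sets. Consequently, if the poset defined by C has one factor (connected incomparability graph), the walks satisfy V(t)>W(t) for all 0<t<n. -/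
/-!
Greediness makes every element of `A` occur in `δ` no earlier than in `λ`, and every element
of `B` no later. So the `A`-part of the length-`t` prefix of `λ` contains that of `δ`, while
the `B`-parts are nested the other way; since `V t - W t` is twice the difference of the
`A`-parts, `W ≤ V`, and `V t = W t` forces the two prefixes to coincide. A common prefix is
closed under incomparability: an incomparable pair lies in different chains, and whichever of
`λ`, `δ` lists the second element before the first shows it lies in the prefix too. So for
`0 < t < n` it would split the incomparability graph.
-/

open scoped Classical

/-- A two-chain cover on `[n]`: a (strict) partial order on `Fin n` whose ground set is
partitioned into two chains, `A` and its complement `B = Aᶜ`. -/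
structure TwoChainCover (n : ℕ) where
  lt : Fin n → Fin n → Prop
  irrefl : ∀ x, ¬lt x x
  trans : ∀ x y z, lt x y → lt y z → lt x z
  A : Finset (Fin n)
  chainA : ∀ x ∈ A, ∀ y ∈ A, x ≠ y → lt x y ∨ lt y x
  chainB : ∀ x y : Fin n, x ∉ A → y ∉ A → x ≠ y → lt x y ∨ lt y x

namespace TwoChainCover

variable {n : ℕ}

/-- The incomparability graph of a two-chain cover: `x ∼ y` iff `x ≠ y` and `x, y` are
incomparable in the partial order. -/
def incompGraph (C : TwoChainCover n) : SimpleGraph (Fin n) where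
  Adj x y := x ≠ y ∧ ¬C.lt x y ∧ ¬C.lt y x
  symm := ⟨fun x y h => ⟨h.1.symm, h.2.2, h.2.1⟩⟩
  loopless := ⟨fun x h => h.1 rfl⟩

/-- A two-chain cover has one factor if its incomparability graph is connected. -/
def OneFactor (C : TwoChainCover n) : Prop := C.incompGraph.Connected

/-- `(λ, δ)` is the greedy pair of linear orders of the cover `C`: both are linear
extensions of the partial order (here given as equivs `Fin n ≃ Fin n`, where `λ i` is the
element in position `i`, so that `λ.symm` records ranks), and every incomparable pair
`a ∈ A`, `b ∈ B` is resolved as `a` before `b` in `λ` and `b` before `a` in `δ`. -/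
def GreedyPair (C : TwoChainCover n) (lam del : Fin n ≃ Fin n) : Prop :=
  (∀ x y, C.lt x y → lam.symm x < lam.symm y) ∧
  (∀ x y, C.lt x y → del.symm x < del.symm y) ∧
  (∀ a ∈ C.A, ∀ b : Fin n, b ∉ C.A → ¬C.lt a b → ¬C.lt b a →
    lam.symm a < lam.symm b ∧ del.symm b < del.symm a)

/-- The walk associated with a linear order `e` (so `Γ(C) = (walk C λ, walk C δ)`): at
step `i + 1` the walk goes up if the element in position `i` lies in the chain `A`, and
down otherwise. -/
def walk (C : TwoChainCover n) (e : Fin n ≃ Fin n) : ℕ → ℤ := fun t =>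
  ∑ i ∈ Finset.univ.filter (fun i : Fin n => (i : ℕ) < t),
    (if e i ∈ C.A then (1 : ℤ) else -1)

/-- The incomparability window of `c`: the number of elements incomparable to `c`. -/
noncomputable def window (C : TwoChainCover n) (c : Fin n) : ℕ :=
  (Finset.univ.filter fun y : Fin n => y ≠ c ∧ ¬C.lt y c ∧ ¬C.lt c y).card

/-- `τ(c)`: the number of elements `y ⪯ c`. -/
noncomputable def tau (C : TwoChainCover n) (c : Fin n) : ℕ :=
  (Finset.univ.filter fun y : Fin n => C.lt y c ∨ y = c).card

/-- The rank of `a` within the chain `A` (so `a = a_i` with `i = rankA C a`). -/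
noncomputable def rankA (C : TwoChainCover n) (a : Fin n) : ℕ :=
  (Finset.univ.filter fun y : Fin n => y ∈ C.A ∧ C.lt y a).card + 1

/-- The rank of `b` within the chain `B = Aᶜ` (so `b = b_j` with `j = rankB C b`). -/
noncomputable def rankB (C : TwoChainCover n) (b : Fin n) : ℕ :=
  (Finset.univ.filter fun y : Fin n => y ∉ C.A ∧ C.lt y b).card + 1

/-- The first time the walk associated with `e` has taken `i` up-steps. -/
noncomputable def tUp (C : TwoChainCover n) (e : Fin n ≃ Fin n) (i : ℕ) : ℕ :=
  sInf {t : ℕ | i ≤ (Finset.univ.filter fun j : Fin n => (j : ℕ) < t ∧ e j ∈ C.A).card}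

/-- The first time the walk associated with `e` has taken `j` down-steps. -/
noncomputable def tDown (C : TwoChainCover n) (e : Fin n ≃ Fin n) (j : ℕ) : ℕ :=
  sInf {t : ℕ | j ≤ (Finset.univ.filter fun i : Fin n => (i : ℕ) < t ∧ e i ∉ C.A).card}

end TwoChainCover

namespace TwoChainCover

open Finset

variable {n : ℕ}

def prefixSet (e : Fin n ≃ Fin n) (t : ℕ) : Finset (Fin n) :=
  univ.filter fun x => (e.symm x : ℕ) < t

lemma image_filter_val_lt (e : Fin n ≃ Fin n) (t : ℕ) :
    (univ.filter fun i : Fin n => (i : ℕ) < t).image e = prefixSet e t := by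
  ext x
  simp only [prefixSet, mem_image, mem_filter, mem_univ, true_and]
  exact ⟨fun ⟨i, hi, hix⟩ => by simpa [← hix] using hi, fun hx => ⟨e.symm x, hx, by simp⟩⟩

lemma card_prefixSet (e : Fin n ≃ Fin n) (t : ℕ) : #(prefixSet e t) = min n t := by
  rw [← image_filter_val_lt, card_image_of_injective _ e.injective, Fin.card_filter_val_lt]

lemma val_symm_le_of_prefixSet_subset {e f : Fin n ≃ Fin n} {x : Fin n}
    (h : prefixSet e (e.symm x) ⊆ prefixSet f (f.symm x)) : (e.symm x : ℕ) ≤ f.symm x := by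
  simpa [card_prefixSet, (e.symm x).isLt.le, (f.symm x).isLt.le] using card_le_card h

lemma walk_eq_card_sub_card (C : TwoChainCover n) (e : Fin n ≃ Fin n) (t : ℕ) :
    C.walk e t = #(prefixSet e t ∩ C.A) - #(prefixSet e t \ C.A) := by
  rw [walk, ← sum_image (f := fun x => if x ∈ C.A then (1 : ℤ) else -1) (e.injective.injOn),
    image_filter_val_lt, sum_ite, filter_mem_eq_inter, filter_notMem_eq_sdiff]
  simp [sub_eq_add_neg]

lemma walk_eq_two_mul_card_sub (C : TwoChainCover n) (e : Fin n ≃ Fin n) (t : ℕ) :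
    C.walk e t = 2 * #(prefixSet e t ∩ C.A) - min n t := by
  have hsplit := card_inter_add_card_sdiff (prefixSet e t) C.A
  rw [card_prefixSet] at hsplit
  rw [walk_eq_card_sub_card]
  omega

lemma mem_A_iff_notMem_A_of_adj (C : TwoChainCover n) {x y : Fin n}
    (h : C.incompGraph.Adj x y) : x ∈ C.A ↔ y ∉ C.A := by
  obtain ⟨hne, hxy, hyx⟩ := h
  constructor
  · intro hx hy
    rcases C.chainA x hx y hy hne with h | h <;> contradiction
  · intro hy
    by_contra hx
    rcases C.chainB x y hx hy hne with h | h <;> contradiction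

namespace GreedyPair

variable {C : TwoChainCover n} {lam del : Fin n ≃ Fin n}

/-- Everything preceding `a ∈ A` in `λ` also precedes it in `δ`. -/
lemma val_symm_le_of_mem (hg : C.GreedyPair lam del) {a : Fin n} (ha : a ∈ C.A) :
    (lam.symm a : ℕ) ≤ del.symm a := by
  obtain ⟨hl, hd, hgr⟩ := hg
  refine val_symm_le_of_prefixSet_subset fun y hy => ?_
  simp only [prefixSet, mem_filter, mem_univ, true_and, Fin.val_fin_lt] at hy ⊢
  by_cases hya : C.lt y a
  · exact hd y a hya
  by_cases hay : C.lt a y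
  · exact absurd (hl a y hay) hy.not_gt
  have hadj : C.incompGraph.Adj a y := ⟨fun h => hy.ne (h ▸ rfl), hay, hya⟩
  exact (hgr a ha y ((C.mem_A_iff_notMem_A_of_adj hadj).mp ha) hay hya).2

lemma val_symm_le_of_notMem (hg : C.GreedyPair lam del) {b : Fin n} (hb : b ∉ C.A) :
    (del.symm b : ℕ) ≤ lam.symm b := by
  obtain ⟨hl, hd, hgr⟩ := hg
  refine val_symm_le_of_prefixSet_subset fun y hy => ?_
  simp only [prefixSet, mem_filter, mem_univ, true_and, Fin.val_fin_lt] at hy ⊢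
  by_cases hyb : C.lt y b
  · exact hl y b hyb
  by_cases hby : C.lt b y
  · exact absurd (hd b y hby) hy.not_gt
  have hadj : C.incompGraph.Adj b y := ⟨fun h => hy.ne (h ▸ rfl), hby, hyb⟩
  have hy : y ∈ C.A := (C.mem_A_iff_notMem_A_of_adj hadj).not_left.mp hb
  exact (hgr y hy b hb hyb hby).1

lemma prefixSet_del_inter_subset (hg : C.GreedyPair lam del) (t : ℕ) :
    prefixSet del t ∩ C.A ⊆ prefixSet lam t ∩ C.A := by
  intro x hx
  simp only [prefixSet, mem_inter, mem_filter, mem_univ, true_and] at hx ⊢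
  exact ⟨(hg.val_symm_le_of_mem hx.2).trans_lt hx.1, hx.2⟩

lemma prefixSet_lam_sdiff_subset (hg : C.GreedyPair lam del) (t : ℕ) :
    prefixSet lam t \ C.A ⊆ prefixSet del t \ C.A := by
  intro x hx
  simp only [prefixSet, mem_sdiff, mem_filter, mem_univ, true_and] at hx ⊢
  exact ⟨(hg.val_symm_le_of_notMem hx.2).trans_lt hx.1, hx.2⟩

lemma walk_del_le_walk_lam (hg : C.GreedyPair lam del) (t : ℕ) :
    C.walk del t ≤ C.walk lam t := by
  have h := card_le_card (hg.prefixSet_del_inter_subset t)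
  rw [walk_eq_two_mul_card_sub, walk_eq_two_mul_card_sub]
  omega

lemma prefixSet_eq_of_walk_eq (hg : C.GreedyPair lam del) {t : ℕ}
    (h : C.walk lam t = C.walk del t) : prefixSet lam t = prefixSet del t := by
  rw [walk_eq_two_mul_card_sub, walk_eq_two_mul_card_sub] at h
  have hA : prefixSet del t ∩ C.A = prefixSet lam t ∩ C.A :=
    eq_of_subset_of_card_le (hg.prefixSet_del_inter_subset t) (by omega)
  have hlam := card_inter_add_card_sdiff (prefixSet lam t) C.A
  have hdel := card_inter_add_card_sdiff (prefixSet del t) C.A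
  rw [card_prefixSet] at hlam hdel
  have hB : prefixSet lam t \ C.A = prefixSet del t \ C.A :=
    eq_of_subset_of_card_le (hg.prefixSet_lam_sdiff_subset t) (by rw [hA] at hdel; omega)
  rw [← sdiff_union_inter (prefixSet lam t) C.A, ← sdiff_union_inter (prefixSet del t) C.A,
    hA, hB]

lemma mem_of_adj_of_prefixSet_eq (hg : C.GreedyPair lam del) {t : ℕ}
    (h : prefixSet lam t = prefixSet del t) {u v : Fin n} (hu : u ∈ prefixSet lam t)
    (huv : C.incompGraph.Adj u v) : v ∈ prefixSet lam t := by
  obtain ⟨-, -, hgr⟩ := hg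
  have hA := C.mem_A_iff_notMem_A_of_adj huv
  obtain ⟨-, hnuv, hnvu⟩ := huv
  by_cases huA : u ∈ C.A
  · rw [h] at hu ⊢
    simp only [prefixSet, mem_filter, mem_univ, true_and] at hu ⊢
    exact (Fin.val_fin_lt.mpr (hgr u huA v (hA.mp huA) hnuv hnvu).2).trans hu
  · have hvA : v ∈ C.A := by tauto
    simp only [prefixSet, mem_filter, mem_univ, true_and] at hu ⊢
    exact (Fin.val_fin_lt.mpr (hgr v hvA u huA hnvu hnuv).1).trans hu

end GreedyPair

end TwoChainCover

open TwoChainCover in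
/-- Let `C = (A, B, ≺)` be a two-chain cover with greedy pair `(λ, δ)` and associated
walks `V = walk C λ`, `W = walk C δ`.  If `V k = W k` for some `0 < k < n`, then the sets
of the first `k` elements of `λ` and of `δ` coincide.  Consequently, if the poset defined
by `C` has one factor (connected incomparability graph), then `V t > W t` for all
`0 < t < n`. -/
theorem greedy_walks_nonhitting_of_oneFactor (n : ℕ) (C : TwoChainCover n)
    (lam del : Fin n ≃ Fin n) (hg : C.GreedyPair lam del) :
    (∀ k, 0 < k → k < n → C.walk lam k = C.walk del k →
      (Finset.univ.filter fun i : Fin n => (i : ℕ) < k).image lam =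
        (Finset.univ.filter fun i : Fin n => (i : ℕ) < k).image del) ∧
    (C.OneFactor → ∀ t, 0 < t → t < n → C.walk del t < C.walk lam t) := by
  refine ⟨fun k _ _ hk => ?_, fun hconn t ht0 htn => ?_⟩
  · rw [image_filter_val_lt, image_filter_val_lt]
    exact hg.prefixSet_eq_of_walk_eq hk
  refine (hg.walk_del_le_walk_lam t).lt_of_ne fun hWV => ?_
  have hS := hg.prefixSet_eq_of_walk_eq hWV.symm
  have hfirst : lam ⟨0, ht0.trans htn⟩ ∈ prefixSet lam t := by simpa [prefixSet] using ht0
  have hlast : lam ⟨t, htn⟩ ∉ prefixSet lam t := by simp [prefixSet]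
  obtain ⟨w⟩ := hconn.preconnected (lam ⟨0, ht0.trans htn⟩) (lam ⟨t, htn⟩)
  obtain ⟨d, -, hd, hd'⟩ := w.exists_boundary_dart (prefixSet lam t : Set (Fin n)) hfirst hlast
  exact hd' (hg.mem_of_adj_of_prefixSet_eq hS hd d.adj)
end
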